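/- Let n = 2 and 0 < ε < 1/4. With F, P, F_o the 2×2 tile, discrete set, and enlarged tile defined below, for every p ∈ P the number of p' ∈ P such that F̄·p ∩ F_o·p' ≠ ∅ is at most 33; and for 1/4 ≤ ε < 1/2 it is at most 36. -/

import Mathlib

noncomputable section

/-- The 2×2 discrete set `P = {2^λ • [[2^κ, 2^{-κ}μ],[0, 2^{-κ}]] : λ, κ, μ ∈ ℤ}`. -/
def P2 : Set (Matrix (Fin 2) (Fin 2) ℝ) :=
  {p | ∃ lam κ μ : ℤ,
    p = (2 : ℝ) ^ lam • !![(2 : ℝ) ^ κ, (2 : ℝ) ^ (-κ) * (μ : ℝ); 0, (2 : ℝ) ^ (-κ)]}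

/-- The 2×2 tile `F = {s • k * [[w, wy],[0, w⁻¹]] : s, w ∈ [1,2), y ∈ [0,1), k ∈ O₂(ℝ)}`. -/
def F2 : Set (Matrix (Fin 2) (Fin 2) ℝ) :=
  {a | ∃ (s w y : ℝ) (k : Matrix (Fin 2) (Fin 2) ℝ),
    s ∈ Set.Ico (1 : ℝ) 2 ∧ w ∈ Set.Ico (1 : ℝ) 2 ∧ y ∈ Set.Ico (0 : ℝ) 1 ∧
    k.transpose * k = 1 ∧
    a = s • (k * !![w, w * y; 0, w⁻¹])}

/-- The 2×2 enlarged tile `F_o`, with `s, w ∈ (1-ε, 2+ε)` and `y ∈ (-ε, 1+ε)`. -/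
def Fo2 (ε : ℝ) : Set (Matrix (Fin 2) (Fin 2) ℝ) :=
  {a | ∃ (s w y : ℝ) (k : Matrix (Fin 2) (Fin 2) ℝ),
    s ∈ Set.Ioo (1 - ε) (2 + ε) ∧ w ∈ Set.Ioo (1 - ε) (2 + ε) ∧
    y ∈ Set.Ioo (-ε) (1 + ε) ∧
    k.transpose * k = 1 ∧
    a = s • (k * !![w, w * y; 0, w⁻¹])}

/-!
Write elements of `F̄` and `F_o` in Iwasawa coordinates `s • k * [[w, w y], [0, w⁻¹]]`. Multiplying
on the right by `p = 2^λ [[2^κ, 2^{-κ} μ], [0, 2^{-κ}]]` gives an element of the same shape with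
coordinates `(s 2^λ, w 2^κ, (μ + y) / 4^κ)`, and these coordinates are unique (compare `aᵀ a`, an
upper-triangular Gram matrix). Hence `a p = b p'` forces `s 2^λ = s' 2^λ'`, `w 2^κ = w' 2^κ'` and
`μ' + y' = 4^(κ' - κ) (μ + y)`. As `s, w ∈ [1, 2]` and `s', w' ∈ (1 - ε, 2 + ε) ⊆ (1/2, 5/2)`, the
exponents `λ'`, `κ'` are within one of `λ`, `κ`, and for each `κ'` the integer `μ'` lies in an open
interval of length `4^(κ' - κ) + 1 + 2ε`. This leaves at most
`3 (⌈5/4 + 2ε⌉ + ⌈2 + 2ε⌉ + ⌈5 + 2ε⌉)` candidates `p'`.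
-/

open Matrix

theorem isCompact_setOf_transpose_mul_self_eq_one (n : Type*) [Fintype n] [DecidableEq n] :
    IsCompact {k : Matrix n n ℝ | kᵀ * k = 1} := by
  have hbox : IsCompact (Set.univ.pi fun _ : n => Set.univ.pi fun _ : n => Set.Icc (-1 : ℝ) 1) :=
    isCompact_univ_pi fun _ => isCompact_univ_pi fun _ => isCompact_Icc
  refine hbox.of_isClosed_subset (isClosed_eq (by fun_prop) continuous_const)
    fun (k : Matrix n n ℝ) (hk : kᵀ * k = 1) => ?_
  have hU : k ∈ unitaryGroup n ℝ := by
    rwa [mem_unitaryGroup_iff', star_eq_conjTranspose, conjTranspose_eq_transpose_of_trivial]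
  exact fun i _ j _ => abs_le.1 (entry_norm_bound_of_unitary hU i j)

/-- `F2` and `Fo2 ε` are definitionally `tile` of their parameter intervals. -/
def tile (I J L : Set ℝ) : Set (Matrix (Fin 2) (Fin 2) ℝ) :=
  {a | ∃ (s w y : ℝ) (k : Matrix (Fin 2) (Fin 2) ℝ),
    s ∈ I ∧ w ∈ J ∧ y ∈ L ∧ kᵀ * k = 1 ∧ a = s • (k * !![w, w * y; 0, w⁻¹])}

theorem tile_mono {I J L I' J' L' : Set ℝ} (hI : I ⊆ I') (hJ : J ⊆ J') (hL : L ⊆ L') :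
    tile I J L ⊆ tile I' J' L' := by
  rintro a ⟨s, w, y, k, hs, hw, hy, hk, rfl⟩
  exact ⟨s, w, y, k, hI hs, hJ hw, hL hy, hk, rfl⟩

theorem isCompact_tile {I J L : Set ℝ} (hI : IsCompact I) (hJ : IsCompact J) (hJ0 : 0 ∉ J)
    (hL : IsCompact L) : IsCompact (tile I J L) := by
  let f : ℝ × ℝ × ℝ × Matrix (Fin 2) (Fin 2) ℝ → Matrix (Fin 2) (Fin 2) ℝ :=
    fun x => x.1 • (x.2.2.2 * !![x.2.1, x.2.1 * x.2.2.1; 0, x.2.1⁻¹])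
  have hf : ContinuousOn f (I ×ˢ J ×ˢ L ×ˢ {k | kᵀ * k = 1}) := fun x hx => by
    have : x.2.1 ≠ 0 := ne_of_mem_of_not_mem hx.2.1 hJ0
    exact ContinuousAt.continuousWithinAt (by fun_prop (disch := exact this))
  convert (hI.prod <| hJ.prod <| hL.prod <|
    isCompact_setOf_transpose_mul_self_eq_one _).image_of_continuousOn hf
  ext a
  constructor
  · rintro ⟨s, w, y, k, hs, hw, hy, hk, rfl⟩
    exact ⟨(s, w, y, k), ⟨hs, hw, hy, hk⟩, rfl⟩
  · rintro ⟨⟨s, w, y, k⟩, ⟨hs, hw, hy, hk⟩, rfl⟩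
    exact ⟨s, w, y, k, hs, hw, hy, hk, rfl⟩

theorem closure_F2_subset_tile : closure F2 ⊆ tile (Set.Icc 1 2) (Set.Icc 1 2) (Set.Icc 0 1) :=
  closure_minimal
    (tile_mono Set.Ico_subset_Icc_self Set.Ico_subset_Icc_self Set.Ico_subset_Icc_self)
    (isCompact_tile isCompact_Icc isCompact_Icc (by norm_num) isCompact_Icc).isClosed

theorem upper_eq_of_orthogonal_mul_eq {k k' : Matrix (Fin 2) (Fin 2) ℝ} (hk : kᵀ * k = 1)
    (hk' : k'ᵀ * k' = 1) {a b c a' b' c' : ℝ} (ha : 0 < a) (hc : 0 < c) (ha' : 0 < a')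
    (hc' : 0 < c') (h : k * !![a, b; 0, c] = k' * !![a', b'; 0, c']) :
    a = a' ∧ b = b' ∧ c = c' := by
  have hgram : (!![a, b; 0, c])ᵀ * !![a, b; 0, c] = (!![a', b'; 0, c'])ᵀ * !![a', b'; 0, c'] := by
    simpa only [transpose_mul, Matrix.mul_assoc, ← Matrix.mul_assoc _ k, ← Matrix.mul_assoc _ k',
      hk, hk', Matrix.one_mul] using congr($(h)ᵀ * $h)
  have e00 := congr_fun₂ hgram 0 0
  have e01 := congr_fun₂ hgram 0 1
  have e11 := congr_fun₂ hgram 1 1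
  simp only [Fin.isValue, Matrix.mul_apply, transpose_apply, of_apply, cons_val', cons_val_zero,
    cons_val_fin_one, Fin.sum_univ_two, cons_val_one, mul_zero, add_zero, zero_mul] at e00 e01 e11
  have haa : a = a' := (mul_self_inj ha.le ha'.le).1 e00
  subst haa
  have hbb : b = b' := mul_left_cancel₀ ha.ne' e01
  subst hbb
  exact ⟨rfl, rfl, (mul_self_inj hc.le hc'.le).1 (by linarith)⟩

theorem smul_orthogonal_mul_upper_inj {k k' : Matrix (Fin 2) (Fin 2) ℝ} (hk : kᵀ * k = 1)
    (hk' : k'ᵀ * k' = 1) {s w y s' w' y' : ℝ} (hs : 0 < s) (hw : 0 < w) (hs' : 0 < s')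
    (hw' : 0 < w') (h : s • (k * !![w, w * y; 0, w⁻¹]) = s' • (k' * !![w', w' * y'; 0, w'⁻¹])) :
    s = s' ∧ w = w' ∧ y = y' := by
  have hsmul (s w y : ℝ) (k : Matrix (Fin 2) (Fin 2) ℝ) :
      s • (k * !![w, w * y; 0, w⁻¹]) = k * !![s * w, s * w * y; 0, s * w⁻¹] := by
    rw [← Matrix.mul_smul, smul_of]
    congr 1
    ext i j
    fin_cases i <;> fin_cases j <;> simp [mul_assoc]
  rw [hsmul, hsmul] at h
  obtain ⟨h1, h2, h3⟩ := upper_eq_of_orthogonal_mul_eq hk hk' (by positivity) (by positivity)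
    (by positivity) (by positivity) h
  have hss : s = s' := by
    refine (mul_self_inj hs.le hs'.le).1 ?_
    calc s * s = (s * w) * (s * w⁻¹) := by field_simp
      _ = (s' * w') * (s' * w'⁻¹) := by rw [h1, h3]
      _ = s' * s' := by field_simp
  subst hss
  have hww : w = w' := mul_left_cancel₀ hs.ne' h1
  subst hww
  exact ⟨rfl, rfl, mul_left_cancel₀ (by positivity) h2⟩

def pMat (l κ m : ℤ) : Matrix (Fin 2) (Fin 2) ℝ :=
  (2 : ℝ) ^ l • !![(2 : ℝ) ^ κ, (2 : ℝ) ^ (-κ) * m; 0, (2 : ℝ) ^ (-κ)]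

theorem smul_orthogonal_mul_upper_mul_pMat (s w y : ℝ) (k : Matrix (Fin 2) (Fin 2) ℝ)
    (l κ m : ℤ) (hw : w ≠ 0) :
    s • (k * !![w, w * y; 0, w⁻¹]) * pMat l κ m =
      (s * 2 ^ l) • (k * !![w * 2 ^ κ, w * 2 ^ κ * ((m + y) / 4 ^ κ); 0, (w * 2 ^ κ)⁻¹]) := by
  have h4 : (4 : ℝ) ^ κ = 2 ^ κ * 2 ^ κ := by rw [← mul_zpow]; norm_num
  rw [pMat, Matrix.smul_mul, Matrix.mul_smul, smul_smul, Matrix.mul_assoc]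
  congr 2
  ext i j
  fin_cases i <;> fin_cases j <;> simp [Matrix.mul_apply, h4, _root_.zpow_neg] <;> field_simp

theorem abs_sub_le_one_of_mul_two_zpow_eq {s s' : ℝ} {l l' : ℤ} (hs' : 0 < s')
    (h : s * 2 ^ l = s' * 2 ^ l') (h₁ : s < 4 * s') (h₂ : s' < 4 * s) : |l' - l| ≤ 1 := by
  have hs : s = s' * 2 ^ (l' - l) := by
    rw [zpow_sub₀ two_ne_zero, ← mul_div_assoc, ← h]; field_simp
  rw [abs_le]
  constructor <;> by_contra! hn
  · have : (2 : ℝ) ^ (l' - l) ≤ 2 ^ (-2 : ℤ) := zpow_le_zpow_right₀ one_le_two (by omega)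
    norm_num at this
    nlinarith
  · have : (2 : ℝ) ^ (2 : ℤ) ≤ 2 ^ (l' - l) := zpow_le_zpow_right₀ one_le_two (by omega)
    norm_num at this
    nlinarith

/-- Offsets `(λ' - λ, κ' - κ)` together with the absolute `μ'`. -/
def neighbourIndices (ε : ℝ) (m : ℤ) : Finset (ℤ × (_ : ℤ) × ℤ) :=
  Finset.Icc (-1) 1 ×ˢ (Finset.Icc (-1) 1).sigma fun d =>
    Finset.Ioo ⌊(4 : ℝ) ^ d * m - 1 - ε⌋ ⌈(4 : ℝ) ^ d * (m + 1) + ε⌉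

theorem mem_neighbourIndices {ε : ℝ} (hε : ε < 1 / 2) {l κ m l' κ' m' : ℤ}
    (h : (((· * pMat l κ m) '' closure F2) ∩ ((· * pMat l' κ' m') '' Fo2 ε)).Nonempty) :
    (l' - l, ⟨κ' - κ, m'⟩) ∈ neighbourIndices ε m := by
  obtain ⟨_, ⟨a, ha, rfl⟩, b, ⟨s', w', y', k', hs', hw', hy', hk', rfl⟩, hab⟩ := h
  obtain ⟨s, w, y, k, hs, hw, hy, hk, rfl⟩ := closure_F2_subset_tile ha
  have hw0 : 0 < w := by linarith [hw.1]
  have hw'0 : 0 < w' := by linarith [hw'.1]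
  have hs0 : 0 < s := by linarith [hs.1]
  have hs'0 : 0 < s' := by linarith [hs'.1]
  dsimp only at hab
  rw [smul_orthogonal_mul_upper_mul_pMat _ _ _ _ _ _ _ hw0.ne',
    smul_orthogonal_mul_upper_mul_pMat _ _ _ _ _ _ _ hw'0.ne'] at hab
  obtain ⟨hsl, hwκ, hmy⟩ := smul_orthogonal_mul_upper_inj hk' hk
    (by positivity) (by positivity) (by positivity) (by positivity) hab
  have hd : (m' : ℝ) + y' = 4 ^ (κ' - κ) * (m + y) := by
    rw [zpow_sub₀ four_ne_zero]
    field_simp at hmy ⊢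
    linarith
  have h4 : (0 : ℝ) ≤ 4 ^ (κ' - κ) := by positivity
  simp only [neighbourIndices, Finset.mem_product, Finset.mem_sigma, Finset.mem_Icc, Finset.mem_Ioo,
    Int.floor_lt, Int.lt_ceil]
  exact ⟨abs_le.1 (abs_sub_le_one_of_mul_two_zpow_eq hs'0 hsl.symm
      (by linarith [hs.2, hs'.1]) (by linarith [hs.1, hs'.2])),
    abs_le.1 (abs_sub_le_one_of_mul_two_zpow_eq hw'0 hwκ.symm
      (by linarith [hw.2, hw'.1]) (by linarith [hw.1, hw'.2])),
    by linarith [mul_nonneg h4 hy.1, hy'.2], by linarith [mul_le_mul_of_nonneg_left hy.2 h4, hy'.1]⟩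

theorem card_Ioo_floor_ceil_le (a b : ℝ) : (Finset.Ioo ⌊a⌋ ⌈b⌉).card ≤ ⌈b - a⌉₊ := by
  rw [Int.card_Ioo, ← Int.ceil_toNat]
  refine Int.toNat_le_toNat ?_
  have h₁ := Int.ceil_add_le (b - a) a
  have h₂ := Int.ceil_le_floor_add_one a
  rw [sub_add_cancel] at h₁
  omega

theorem card_neighbourIndices_le (ε : ℝ) (m : ℤ) :
    (neighbourIndices ε m).card ≤ 3 * (⌈5 / 4 + 2 * ε⌉₊ + ⌈2 + 2 * ε⌉₊ + ⌈5 + 2 * ε⌉₊) := by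
  have hfiber (d : ℤ) : (Finset.Ioo ⌊(4 : ℝ) ^ d * m - 1 - ε⌋ ⌈(4 : ℝ) ^ d * (m + 1) + ε⌉).card ≤
      ⌈4 ^ d + 1 + 2 * ε⌉₊ :=
    (card_Ioo_floor_ceil_le _ _).trans_eq (by congr 1; ring)
  have hm1 := (hfiber (-1)).trans_eq (congr_arg _ (by norm_num) : _ = ⌈5 / 4 + 2 * ε⌉₊)
  have h0 := (hfiber 0).trans_eq (congr_arg _ (by norm_num) : _ = ⌈2 + 2 * ε⌉₊)
  have h1 := (hfiber 1).trans_eq (congr_arg _ (by norm_num) : _ = ⌈5 + 2 * ε⌉₊)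
  have hIcc : Finset.Icc (-1 : ℤ) 1 = {-1, 0, 1} := by decide
  rw [neighbourIndices, Finset.card_product, Finset.card_sigma, hIcc, Finset.sum_insert (by decide),
    Finset.sum_insert (by decide), Finset.sum_singleton]
  exact Nat.mul_le_mul (by decide) (by omega)

theorem stmt_17_general (ε : ℝ) (hε' : ε < 1 / 2)
    (p : Matrix (Fin 2) (Fin 2) ℝ) (hp : p ∈ P2) :
    {p' ∈ P2 | (((· * p) '' closure F2) ∩ ((· * p') '' Fo2 ε)).Nonempty}.Finite ∧
    (ε < 1 / 4 →
      {p' ∈ P2 | (((· * p) '' closure F2) ∩ ((· * p') '' Fo2 ε)).Nonempty}.ncard ≤ 33) ∧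
    (1 / 4 ≤ ε →
      {p' ∈ P2 | (((· * p) '' closure F2) ∩ ((· * p') '' Fo2 ε)).Nonempty}.ncard ≤ 36) := by
  obtain ⟨l, κ, m, hp⟩ := hp
  replace hp : p = pMat l κ m := hp
  subst hp
  set S := {p' ∈ P2 | (((· * pMat l κ m) '' closure F2) ∩ ((· * p') '' Fo2 ε)).Nonempty}
  have hsub : S ⊆ (neighbourIndices ε m).image fun i => pMat (l + i.1) (κ + i.2.1) i.2.2 := by
    rintro _ ⟨⟨l', κ', m', rfl⟩, h⟩
    exact Finset.mem_image.2 ⟨_, mem_neighbourIndices hε' h, by simp only [add_sub_cancel]; rfl⟩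
  have hcard : S.ncard ≤ 3 * (⌈5 / 4 + 2 * ε⌉₊ + ⌈2 + 2 * ε⌉₊ + ⌈5 + 2 * ε⌉₊) := by
    refine (Set.ncard_le_ncard hsub (Finset.finite_toSet _)).trans ?_
    rw [Set.ncard_coe_finset]
    exact Finset.card_image_le.trans (card_neighbourIndices_le ε m)
  have hceil2 : ⌈2 + 2 * ε⌉₊ ≤ 3 := Nat.ceil_le.2 (by norm_num; linarith)
  have hceil5 : ⌈5 + 2 * ε⌉₊ ≤ 6 := Nat.ceil_le.2 (by norm_num; linarith)
  refine ⟨(Finset.finite_toSet _).subset hsub, fun hε₁ => ?_, fun _ => ?_⟩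
  · have : ⌈5 / 4 + 2 * ε⌉₊ ≤ 2 := Nat.ceil_le.2 (by norm_num; linarith)
    omega
  · have : ⌈5 / 4 + 2 * ε⌉₊ ≤ 3 := Nat.ceil_le.2 (by norm_num; linarith)
    omega

/-- For `n = 2` and `0 < ε < 1/4`, for every `p ∈ P` the number of
`p' ∈ P` with `F̄·p ∩ F_o·p' ≠ ∅` is at most `33`; and for `1/4 ≤ ε < 1/2` it is at
most `36`. -/
theorem stmt_17 (ε : ℝ) (hε : 0 < ε) (hε' : ε < 1 / 2)
    (p : Matrix (Fin 2) (Fin 2) ℝ) (hp : p ∈ P2) :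
    {p' ∈ P2 | (((· * p) '' closure F2) ∩ ((· * p') '' Fo2 ε)).Nonempty}.Finite ∧
    (ε < 1 / 4 →
      {p' ∈ P2 | (((· * p) '' closure F2) ∩ ((· * p') '' Fo2 ε)).Nonempty}.ncard ≤ 33) ∧
    (1 / 4 ≤ ε →
      {p' ∈ P2 | (((· * p) '' closure F2) ∩ ((· * p') '' Fo2 ε)).Nonempty}.ncard ≤ 36) :=
  stmt_17_general ε hε' p hp
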